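/- arXiv:1209.4336 — 2 statements merged into one kernel-verified Lean document; each statement's English description precedes it below -/
import Mathlib

section
/- Let E be a row-finite directed graph, {p_v, s_e} a Cuntz–Krieger E-family, and let v ≠ w be vertices with a directed path from v to w in E. Then there exist non-negative integers (m_u)_{u ∈ E^0}, all but finitely many zero, such that p_v is Murray–von Neumann equivalent (in matrices over the generated C*-algebra) to p_w ⊕ ⨁_{u ∈ E^0} m_u · p_u. Moreover m_v can be chosen with m_v ≥ |{e ∈ E^1 : s(e) = r(e) = v}|. -/
/-- A directed graph: vertices, edges, source and range maps. -/
structure DGraph where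
  V : Type
  E : Type
  s : E → V
  r : E → V

namespace DGraph

/-- A vertex is regular if it emits finitely many, but at least one, edge. -/
def Regular (G : DGraph) (v : G.V) : Prop :=
  {e : G.E | G.s e = v}.Finite ∧ {e : G.E | G.s e = v}.Nonempty

end DGraph

/-- A Cuntz–Krieger `G`-family in a C*-algebra `A`: mutually orthogonal projections
`P v` and partial isometries `S e` satisfying the Cuntz–Krieger relations
(CK0)–(CK3).  The inequality `S e (S e)* ≤ P (s e)` is encoded algebraically as
`P (s e) * (S e (S e)*) = S e (S e)*`. -/
structure IsCKFamily (G : DGraph) {A : Type*} [NonUnitalCStarAlgebra A]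
    (P : G.V → A) (S : G.E → A) : Prop where
  proj_idem : ∀ v : G.V, P v * P v = P v
  proj_star : ∀ v : G.V, star (P v) = P v
  orth : ∀ v w : G.V, v ≠ w → P v * P w = 0
  ck0 : ∀ e f : G.E, e ≠ f → star (S e) * S f = 0
  ck1 : ∀ e : G.E, star (S e) * S e = P (G.r e)
  ck2 : ∀ e : G.E, P (G.s e) * (S e * star (S e)) = S e * star (S e)
  ck3 : ∀ v : G.V, G.Regular v → P v = ∑ᶠ e ∈ {e : G.E | G.s e = v}, S e * star (S e)

open scoped Matrix Classical

/-- One-step reachability: there is an edge from `v` to `w`. -/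
def DGraph.Step (G : DGraph) (v w : G.V) : Prop := ∃ e : G.E, G.s e = v ∧ G.r e = w

/-!
By the Cuntz–Krieger relations, the column `(s_e*)_{s(e) = u}` implements the equivalence
`p_u ∼ ⨁_{s(e) = u} p_{r(e)}`. Such equivalences can be spliced: an equivalence of one summand
`p_{r(e)}` with a further direct sum can be substituted into the slot of `e`. Follow a path from
`v` to `w` and splice at every step. The first edge is taken to be the last one leaving `v` along
the path, so it is not a loop, and the loops at `v` survive the first expansion as summands `p_v`.
-/

section MvN

variable {A : Type*} [NonUnitalNormedRing A] [StarRing A]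

theorem mul_star_mul_self_of_isIdempotentElem [CStarRing A] {x : A}
    (h : IsIdempotentElem (x * star x)) :
    x * star x * x = x := by
  set p := x * star x
  -- `y := x - p x` satisfies `y y* = p - 2 p² + p³ = 0`.
  have hy : (x - p * x) * star (x - p * x) = p - p * p - p * p + p * p * p := by
    simp only [p, star_sub, star_mul, star_star]
    noncomm_ring
  rw [h.eq, h.eq, sub_self, zero_sub, neg_add_cancel, CStarRing.mul_star_self_eq_zero_iff,
    sub_eq_zero] at hy
  exact hy.symm

/-- `x`, read as a column, satisfies `xᴴ x = p` and `x xᴴ = diag q`. -/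
structure IsMvNColumn {ι : Type*} [Fintype ι] (p : A) (q : ι → A) (x : ι → A) : Prop where
  sum_star_mul_self : ∑ i, star (x i) * x i = p
  mul_star_self : ∀ i, x i * star (x i) = q i
  mul_star_of_ne : ∀ {i j}, i ≠ j → x i * star (x j) = 0

namespace IsMvNColumn

variable {ι κ : Type*} [Fintype ι] [Fintype κ] {p : A} {q : ι → A} {x : ι → A}

theorem mul_star_mul_self [CStarRing A] (h : IsMvNColumn p q x) {i : ι}
    (hq : IsIdempotentElem (q i)) :
    x i * star (x i) * x i = x i :=
  mul_star_mul_self_of_isIdempotentElem (h.mul_star_self i ▸ hq)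

theorem mul_eq_self [CStarRing A] (h : IsMvNColumn p q x) {i : ι} (hq : IsIdempotentElem (q i)) :
    x i * p = x i := by
  rw [← h.sum_star_mul_self, Finset.mul_sum, Finset.sum_eq_single i, ← mul_assoc,
    h.mul_star_mul_self hq]
  · intro j _ hji
    rw [← mul_assoc, h.mul_star_of_ne hji.symm, zero_mul]
  · exact fun hi => absurd (Finset.mem_univ i) hi

theorem self (hp : IsStarProjection p) : IsMvNColumn p (fun _ : Unit => p) (fun _ => p) where
  sum_star_mul_self := by simp [hp.isSelfAdjoint.star_eq, hp.isIdempotentElem.eq]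
  mul_star_self _ := by rw [hp.isSelfAdjoint.star_eq, hp.isIdempotentElem.eq]
  mul_star_of_ne h := absurd rfl h

theorem splice [CStarRing A] [DecidableEq ι] (hx : IsMvNColumn p q x) (i₀ : ι)
    (hq : IsIdempotentElem (q i₀))
    {q' : κ → A} {y : κ → A} (hy : IsMvNColumn (q i₀) q' y)
    (hq' : ∀ j, IsIdempotentElem (q' j)) :
    IsMvNColumn p (Sum.elim (fun i : {i // i ≠ i₀} => q i) q')
      (Sum.elim (fun i => x i) (fun j => y j * x i₀)) := by
  have hqx : q i₀ * x i₀ = x i₀ := by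
    rw [← hx.mul_star_self]; exact hx.mul_star_mul_self hq
  have hyq : ∀ j, y j * x i₀ * star (x i₀) = y j := fun j => by
    rw [mul_assoc, hx.mul_star_self]; exact hy.mul_eq_self (hq' j)
  refine ⟨?_, ?_, ?_⟩
  · have hinr : ∑ j, star (y j * x i₀) * (y j * x i₀) = star (x i₀) * x i₀ := by
      simp only [star_mul, mul_assoc, ← Finset.mul_sum]
      simp only [← mul_assoc, ← Finset.sum_mul, hy.sum_star_mul_self]
      rw [mul_assoc, hqx]
    rw [Fintype.sum_sum_type, ← hx.sum_star_mul_self, Fintype.sum_eq_add_sum_subtype_ne _ i₀]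
    simp only [Sum.elim_inl, Sum.elim_inr, hinr, add_comm]
  · rintro (i | j)
    · exact hx.mul_star_self i
    · simp only [Sum.elim_inr, star_mul, ← mul_assoc, hyq, hy.mul_star_self]
  · rintro (i | j) (k | l) hne
    · exact hx.mul_star_of_ne fun h => hne (congrArg Sum.inl (Subtype.ext h))
    · simp only [Sum.elim_inl, Sum.elim_inr, star_mul, ← mul_assoc, hx.mul_star_of_ne i.2,
        zero_mul]
    · simp only [Sum.elim_inl, Sum.elim_inr, mul_assoc, hx.mul_star_of_ne (Ne.symm k.2),
        mul_zero]
    · have hjl : j ≠ l := fun h => hne (congrArg Sum.inr h)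
      simp only [Sum.elim_inr, star_mul, ← mul_assoc, hyq, hy.mul_star_of_ne hjl]

theorem reindex (h : IsMvNColumn p q x) (e : ι ≃ κ) :
    IsMvNColumn p (q ∘ e.symm) (x ∘ e.symm) where
  sum_star_mul_self := by
    rw [← h.sum_star_mul_self]; exact e.symm.sum_comp fun i => star (x i) * x i
  mul_star_self i := h.mul_star_self (e.symm i)
  mul_star_of_ne hne := h.mul_star_of_ne (e.symm.injective.ne hne)

theorem exists_matrix [DecidableEq ι] (h : IsMvNColumn p q x) :
    ∃ X : Matrix ι (Fin 1) A,
      Xᴴ * X = Matrix.of (fun _ _ => p) ∧ X * Xᴴ = Matrix.diagonal q := by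
  refine ⟨Matrix.of fun i _ => x i, ?_, ?_⟩ <;> ext i j
  · simpa [Matrix.mul_apply] using h.sum_star_mul_self
  · rcases eq_or_ne i j with rfl | hij
    · simpa [Matrix.mul_apply] using h.mul_star_self i
    · simpa [Matrix.mul_apply, hij] using h.mul_star_of_ne hij

end IsMvNColumn

end MvN

theorem Relation.TransGen.exists_head_ne {α : Type*} {r : α → α → Prop} {a b : α}
    (h : Relation.TransGen r a b) (hab : a ≠ b) :
    ∃ c, c ≠ a ∧ r a c ∧ Relation.ReflTransGen r c b := by
  induction h using Relation.TransGen.head_induction_on with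
  | single hac => exact ⟨_, hab.symm, hac, .refl⟩
  | @head a c hac hcb ih =>
    by_cases hca : c = a
    · subst hca; exact ih hab
    · exact ⟨c, hca, hac, hcb.to_reflTransGen⟩

theorem exists_finsupp_ncard_fiber_eq {ι V : Type*} [Finite ι] {d : ι → V} {w : V}
    (hw : w ∈ Set.range d) :
    ∃ m : V →₀ ℕ, ∀ u, {i | d i = u}.ncard = (if u = w then 1 else 0) + m u := by
  let f u := {i | d i = u}.ncard - if u = w then 1 else 0
  have hf : (Function.support f).Finite :=
    (Set.finite_range d).subset fun u hu =>
      Set.nonempty_of_ncard_ne_zero (s := {i | d i = u}) fun h0 => hu (by simp [f, h0])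
  refine ⟨Finsupp.ofSupportFinite f hf, fun u => ?_⟩
  simp only [Finsupp.ofSupportFinite_coe, f]
  split_ifs with huw
  · obtain ⟨i, hi⟩ := hw
    have : 0 < {i | d i = u}.ncard :=
      (Set.ncard_pos (Set.toFinite _)).mpr ⟨i, hi.trans huw.symm⟩
    omega
  · omega

namespace IsCKFamily

variable {G : DGraph} {A : Type*} [NonUnitalCStarAlgebra A] {P : G.V → A} {S : G.E → A}

theorem isStarProjection (hfam : IsCKFamily G P S) (v : G.V) : IsStarProjection (P v) :=
  ⟨hfam.proj_idem v, hfam.proj_star v⟩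

theorem isMvNColumn_edges (hfam : IsCKFamily G P S) (v : G.V) [Fintype {e | G.s e = v}]
    (hv : {e | G.s e = v}.Nonempty) :
    IsMvNColumn (P v) (fun e : {e | G.s e = v} => P (G.r e)) (fun e => star (S e)) where
  sum_star_mul_self := by
    simp only [star_star]
    rw [hfam.ck3 v ⟨Set.toFinite _, hv⟩, ← finsum_set_coe_eq_finsum_mem,
      finsum_eq_sum_of_fintype]
  mul_star_self e := by rw [star_star, hfam.ck1]
  mul_star_of_ne hef := by rw [star_star, hfam.ck0 _ _ (Subtype.coe_injective.ne hef)]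

theorem isMvNColumn_splice_edge (hfam : IsCKFamily G P S) {v : G.V} [Fintype {e | G.s e = v}]
    (e₀ : {e | G.s e = v}) {κ : Type} [Fintype κ] {d : κ → G.V} {y : κ → A}
    (hy : IsMvNColumn (P (G.r e₀)) (P ∘ d) y) :
    IsMvNColumn (P v) (P ∘ Sum.elim (fun e : {e // e ≠ e₀} => G.r e.1) d)
      (Sum.elim (fun e => star (S e.1)) (fun j => y j * star (S e₀))) := by
  rw [Sum.comp_elim]
  exact (hfam.isMvNColumn_edges v ⟨e₀, e₀.2⟩).splice e₀ (hfam.proj_idem _) hy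
    fun j => hfam.proj_idem (d j)

theorem exists_isMvNColumn_of_reflTransGen (hfam : IsCKFamily G P S)
    (hrow : ∀ u : G.V, {e : G.E | G.s e = u}.Finite) {u w : G.V}
    (h : Relation.ReflTransGen G.Step u w) :
    ∃ (ι : Type) (_ : Fintype ι) (d : ι → G.V) (x : ι → A),
      IsMvNColumn (P u) (P ∘ d) x ∧ w ∈ Set.range d := by
  induction h using Relation.ReflTransGen.head_induction_on with
  | refl => exact ⟨Unit, _, fun _ => w, _, .self (hfam.isStarProjection w), (), rfl⟩
  | head hac _ ih =>
    obtain ⟨e, rfl, rfl⟩ := hac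
    obtain ⟨ι, _, d, y, hy, i, hi⟩ := ih
    have := (hrow (G.s e)).fintype
    exact ⟨_, _, _, _, hfam.isMvNColumn_splice_edge ⟨e, rfl⟩ hy, Sum.inr i, hi⟩

theorem exists_isMvNColumn_of_transGen (hfam : IsCKFamily G P S)
    (hrow : ∀ u : G.V, {e : G.E | G.s e = u}.Finite) {v w : G.V} (hvw : v ≠ w)
    (h : Relation.TransGen G.Step v w) :
    ∃ (ι : Type) (_ : Fintype ι) (d : ι → G.V) (x : ι → A),
      IsMvNColumn (P v) (P ∘ d) x ∧ w ∈ Set.range d ∧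
        {e | G.s e = v ∧ G.r e = v}.ncard ≤ {i | d i = v}.ncard := by
  obtain ⟨c, hcv, ⟨e₀, he₀, rfl⟩, hcw⟩ := h.exists_head_ne hvw
  obtain ⟨κ, _, d, y, hy, j, hj⟩ := hfam.exists_isMvNColumn_of_reflTransGen hrow hcw
  have := (hrow v).fintype
  set e₀' : {e | G.s e = v} := ⟨e₀, he₀⟩
  refine ⟨_, _, _, _, hfam.isMvNColumn_splice_edge e₀' hy, ⟨Sum.inr j, hj⟩, ?_⟩
  let g : {e // e ≠ e₀'} ⊕ κ → G.E := Sum.elim (·.1.1) fun _ => e₀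
  have hloops :
      {e | G.s e = v ∧ G.r e = v} ⊆ g '' {k | Sum.elim (fun e => G.r e.1.1) d k = v} :=
    fun e ⟨hes, her⟩ =>
      ⟨.inl ⟨⟨e, hes⟩, fun h => hcv ((congrArg (G.r ∘ Subtype.val) h).symm.trans her)⟩,
        her, rfl⟩
  exact (Set.ncard_le_ncard hloops (Set.toFinite _)).trans (Set.ncard_image_le (Set.toFinite _))

end IsCKFamily

/-- Let `G` be a row-finite graph, `{P v, S e}` a Cuntz–Krieger `G`-family, and `v ≠ w`
vertices with a directed path from `v` to `w`.  Then there is a finitely supported family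
of non-negative integers `m` with `m v` at least the number of loops based at `v`, such
that `P v` is Murray–von Neumann equivalent (in matrices over the algebra) to the
diagonal projection consisting of `P w` once together with `m u` copies of `P u` for
each vertex `u`. -/
theorem ck_proj_equiv_of_path {G : DGraph} {A : Type*} [NonUnitalCStarAlgebra A]
    (hrow : ∀ u : G.V, {e : G.E | G.s e = u}.Finite)
    {P : G.V → A} {S : G.E → A} (hfam : IsCKFamily G P S)
    (v w : G.V) (hvw : v ≠ w) (hpath : Relation.TransGen G.Step v w) :
    ∃ m : G.V →₀ ℕ,
      {e : G.E | G.s e = v ∧ G.r e = v}.ncard ≤ m v ∧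
      ∃ (N : ℕ) (d : Fin N → G.V),
        (∀ u : G.V, ({i : Fin N | d i = u}).ncard = (if u = w then 1 else 0) + m u) ∧
        ∃ x : Matrix (Fin N) (Fin 1) A,
          xᴴ * x = Matrix.of (fun _ _ => P v) ∧
          x * xᴴ = Matrix.diagonal (fun i : Fin N => P (d i)) := by
  obtain ⟨ι, _, d, x, hx, hw, hloops⟩ := hfam.exists_isMvNColumn_of_transGen hrow hvw hpath
  let e := Fintype.equivFin ι
  have hfiber : {i | d (e.symm i) = v}.ncard = {i | d i = v}.ncard :=
    Set.ncard_preimage_of_injective_subset_range (s := {i | d i = v}) e.symm.injective (by simp)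
  obtain ⟨m, hm⟩ := exists_finsupp_ncard_fiber_eq (d := d ∘ e.symm) (by simpa using hw)
  refine ⟨m, ?_, _, d ∘ e.symm, hm, (hx.reindex e).exists_matrix⟩
  have hmv := hm v
  rw [if_neg hvw, zero_add] at hmv
  exact hmv ▸ hfiber ▸ hloops
end

section
/- Let E be a directed graph, e_0 ∈ E^1 an edge, n ≥ 1, and let {s_e, p_v} be a Cuntz–Krieger E(e_0,n)-family in a C*-algebra, where E(e_0,n) is the graph obtained from E by subdividing e_0 into a path e_{n+1} e_n ⋯ e_1 through new vertices v_1, …, v_n. Define Q_v = p_v for v ∈ E^0 ∪ {v_1,…,v_n}, T_e = s_e for e ∈ E^1 \ {e_0} and e ∈ {e_1,…,e_n}, and T_{e_0} = s_{e_{n+1}} s_{e_n} ⋯ s_{e_1}. Then {T_e, Q_v} is a Cuntz–Krieger E(v_0,n)-family, where E(v_0,n) is the graph obtained from E by attaching a head of length n at v_0 = r(e_0). -/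
open Classical in
/-- The graph `E(v₀,n)`: attach a head `vₙ → ⋯ → v₁ → v₀` of length `n` at the vertex
`v₀`.  New vertices are `Fin n` (index `i` is `v_{i+1}`) and new edges are `Fin n`
(index `i` is `e_{i+1} : v_{i+1} → v_i`). -/
noncomputable def headAttach (G : DGraph) (v0 : G.V) (n : ℕ) : DGraph where
  V := G.V ⊕ Fin n
  E := G.E ⊕ Fin n
  s := Sum.elim (fun e => Sum.inl (G.s e)) (fun i => Sum.inr i)
  r := Sum.elim (fun e => Sum.inl (G.r e))
    (fun i => if h : (i : ℕ) = 0 then Sum.inl v0 else Sum.inr ⟨(i : ℕ) - 1, by omega⟩)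

open Classical in
/-- The graph `E(e₀,n)`: subdivide the edge `e₀` into a path
`e_{n+1} e_n ⋯ e_1` through new vertices `v_1, …, v_n`.  New vertices are `Fin n`
(index `i` is `v_{i+1}`), new edges are `Fin (n+1)` (index `j` is `e_{j+1}`), with
`s(e_{j+1}) = v_{j+1}` for `j < n`, `s(e_{n+1}) = s(e₀)`, `r(e_1) = r(e₀)` and
`r(e_{j+1}) = v_j` for `j ≥ 1`. -/
noncomputable def subdivide (G : DGraph) (e0 : G.E) (n : ℕ) : DGraph where
  V := G.V ⊕ Fin n
  E := {e : G.E // e ≠ e0} ⊕ Fin (n + 1)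
  s := Sum.elim (fun e => Sum.inl (G.s e.1))
    (fun j => if h : (j : ℕ) < n then Sum.inr ⟨(j : ℕ), h⟩ else Sum.inl (G.s e0))
  r := Sum.elim (fun e => Sum.inl (G.r e.1))
    (fun j => if h : (j : ℕ) = 0 then Sum.inl (G.r e0)
      else Sum.inr ⟨(j : ℕ) - 1, by omega⟩)

/-- `descProd f k = f k * f (k-1) * ⋯ * f 0`, a descending product. -/
def descProd {A : Type*} [Mul A] (f : ℕ → A) : ℕ → A
  | 0 => f 0
  | (k + 1) => f (k + 1) * descProd f k

/-!
Each intermediate vertex `v_i` emits only `e_i`, so (CK3) gives `p_{v_i} = s_{e_i} s_{e_i}^*`.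
Telescoping along the path, `T_{e₀} = s_{e_{n+1}} ⋯ s_{e_1}` has source projection `p_{r(e₀)}`
and the same range projection as `s_{e_{n+1}}`. Sending `e₀` to `e_{n+1}` and every other edge
of `E(v₀,n)` to its namesake is a source-preserving bijection onto the edges of `E(e₀,n)`, and
a family whose source and range projections match those of a Cuntz–Krieger family along such
a bijection is again a Cuntz–Krieger family: (CK0) follows from the orthogonality of the range
projections, and (CK3) is the old sum reindexed.
-/

theorem mul_star_mul_self_of_isIdempotentElem_s9 {E : Type*} [NonUnitalNormedRing E] [StarRing E]
    [CStarRing E] {a : E} (h : IsIdempotentElem (star a * a)) : a * (star a * a) = a := by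
  have hzero : star (a * (star a * a) - a) * (a * (star a * a) - a) = 0 := by
    simp only [star_sub, star_mul, star_star, sub_mul, mul_sub, mul_assoc]
    simp only [← mul_assoc (star a) a, h.eq, sub_self]
  exact sub_eq_zero.mp ((CStarRing.star_mul_self_eq_zero_iff _).mp hzero)

namespace IsCKFamily

variable {G : DGraph} {A : Type*} [NonUnitalCStarAlgebra A] {P : G.V → A} {S : G.E → A}

theorem mul_proj_range (h : IsCKFamily G P S) (e : G.E) : S e * P (G.r e) = S e := by
  rw [← h.ck1]
  exact mul_star_mul_self_of_isIdempotentElem_s9 (by rw [h.ck1]; exact h.proj_idem _)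

theorem proj_source_mul (h : IsCKFamily G P S) (e : G.E) : P (G.s e) * S e = S e := by
  have hS : S e * star (S e) * S e = S e := by rw [mul_assoc, h.ck1, h.mul_proj_range]
  rw [← hS, ← mul_assoc, h.ck2]

theorem mul_star_mul_mul_star_of_ne (h : IsCKFamily G P S) {e f : G.E} (hef : e ≠ f) :
    S e * star (S e) * (S f * star (S f)) = 0 := by
  rw [mul_assoc, ← mul_assoc (star (S e)), h.ck0 e f hef, zero_mul, mul_zero]

theorem proj_eq_of_source_eq_singleton (h : IsCKFamily G P S) {v : G.V} {e : G.E}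
    (hv : {f : G.E | G.s f = v} = {e}) : P v = S e * star (S e) := by
  have hreg : G.Regular v := by
    rw [DGraph.Regular, hv]
    exact ⟨Set.finite_singleton e, Set.singleton_nonempty e⟩
  rw [h.ck3 v hreg, hv, finsum_mem_singleton]

theorem proj_source_mul_descProd (h : IsCKFamily G P S) (g : ℕ → G.E) :
    ∀ k, P (G.s (g k)) * descProd (fun j => S (g j)) k = descProd (fun j => S (g j)) k
  | 0 => h.proj_source_mul (g 0)
  | k + 1 => by rw [descProd, ← mul_assoc, h.proj_source_mul]

theorem star_descProd_mul_descProd (h : IsCKFamily G P S) {g : ℕ → G.E} {k : ℕ}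
    (hpath : ∀ i < k, G.r (g (i + 1)) = G.s (g i)) :
    star (descProd (fun j => S (g j)) k) * descProd (fun j => S (g j)) k = P (G.r (g 0)) := by
  induction k with
  | zero => exact h.ck1 (g 0)
  | succ k ih =>
    calc star (descProd (fun j => S (g j)) (k + 1)) * descProd (fun j => S (g j)) (k + 1)
        = star (descProd (fun j => S (g j)) k) * (star (S (g (k + 1))) * S (g (k + 1)))
          * descProd (fun j => S (g j)) k := by
          simp only [descProd, star_mul, mul_assoc]
      _ = star (descProd (fun j => S (g j)) k) * descProd (fun j => S (g j)) k := by
          rw [h.ck1, hpath k k.lt_succ_self, mul_assoc, h.proj_source_mul_descProd]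
      _ = P (G.r (g 0)) := ih fun i hi => hpath i (Nat.lt_succ_of_lt hi)

theorem descProd_mul_star_descProd (h : IsCKFamily G P S) {g : ℕ → G.E} {k : ℕ}
    (hpath : ∀ i < k, G.r (g (i + 1)) = G.s (g i))
    (hproj : ∀ i < k, P (G.s (g i)) = S (g i) * star (S (g i))) :
    descProd (fun j => S (g j)) k * star (descProd (fun j => S (g j)) k) =
      S (g k) * star (S (g k)) := by
  induction k with
  | zero => rfl
  | succ k ih =>
    calc descProd (fun j => S (g j)) (k + 1) * star (descProd (fun j => S (g j)) (k + 1))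
        = S (g (k + 1)) * (descProd (fun j => S (g j)) k * star (descProd (fun j => S (g j)) k))
          * star (S (g (k + 1))) := by
          simp only [descProd, star_mul, mul_assoc]
      _ = S (g (k + 1)) * star (S (g (k + 1))) := by
          rw [ih (fun i hi => hpath i (Nat.lt_succ_of_lt hi))
              (fun i hi => hproj i (Nat.lt_succ_of_lt hi)),
            ← hproj k k.lt_succ_self, ← hpath k k.lt_succ_self, h.mul_proj_range]

theorem of_edge_bijective {H K : DGraph} {P : K.V → A} {S : K.E → A} (hK : IsCKFamily K P S)
    {σ : H.V → K.V} (hσ : σ.Injective) {φ : H.E → K.E} (hφ : φ.Bijective)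
    (hs : ∀ e, K.s (φ e) = σ (H.s e)) {T : H.E → A}
    (hrange : ∀ e, T e * star (T e) = S (φ e) * star (S (φ e)))
    (hsource : ∀ e, star (T e) * T e = P (σ (H.r e))) :
    IsCKFamily H (P ∘ σ) T := by
  have hT : ∀ e, T e * star (T e) * T e = T e := fun e => by
    rw [mul_assoc]
    exact mul_star_mul_self_of_isIdempotentElem_s9 (by rw [hsource]; exact hK.proj_idem _)
  have hfiber : ∀ v, {f | K.s f = σ v} = φ '' {e | H.s e = v} := fun v => by
    ext f
    obtain ⟨e, rfl⟩ := hφ.2 f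
    simp [hs, hσ.eq_iff, hφ.1.eq_iff]
  refine ⟨fun v => hK.proj_idem _, fun v => hK.proj_star _,
    fun v w hvw => hK.orth _ _ (hσ.ne hvw), fun e f hef => ?_, hsource, fun e => ?_, fun v hv => ?_⟩
  · calc star (T e) * T f = star (T e * star (T e) * T e) * (T f * star (T f) * T f) := by
          rw [hT, hT]
      _ = star (T e) * (T e * star (T e) * (T f * star (T f))) * T f := by
          simp only [star_mul, star_star, mul_assoc]
      _ = 0 := by
          rw [hrange, hrange, hK.mul_star_mul_mul_star_of_ne (hφ.1.ne hef), mul_zero, zero_mul]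
  · rw [hrange, Function.comp_apply, ← hs]
    exact hK.ck2 _
  · have hreg : K.Regular (σ v) := by
      rw [DGraph.Regular, hfiber]
      exact ⟨hv.1.image φ, hv.2.image φ⟩
    rw [Function.comp_apply, hK.ck3 _ hreg, hfiber, finsum_mem_image hφ.1.injOn]
    exact finsum_mem_congr rfl fun e _ => (hrange e).symm

end IsCKFamily

section Subdivide

open Fin.NatCast

variable {G : DGraph} {e0 : G.E} {n : ℕ}

open Classical in
noncomputable def subdivideEdge (e0 : G.E) (n : ℕ) :
    G.E ⊕ Fin n → {e : G.E // e ≠ e0} ⊕ Fin (n + 1) :=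
  Sum.elim (fun g => if h : g = e0 then Sum.inr (Fin.last n) else Sum.inl ⟨g, h⟩)
    (fun i => Sum.inr i.castSucc)

theorem subdivideEdge_bijective : (subdivideEdge e0 n).Bijective := by
  constructor
  · rintro (g | i) (g' | i') h <;> simp only [subdivideEdge, Sum.elim_inl, Sum.elim_inr] at h <;>
      (try split_ifs at h) <;> simp_all [Fin.ext_iff] <;> omega
  · rintro (⟨g, hg⟩ | j)
    · exact ⟨Sum.inl g, by simp [subdivideEdge, hg]⟩
    · by_cases hj : j = Fin.last n
      · exact ⟨Sum.inl e0, by simp [subdivideEdge, hj]⟩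
      · exact ⟨Sum.inr (j.castPred hj), by simp [subdivideEdge]⟩

theorem subdivide_s_subdivideEdge (e : (headAttach G (G.r e0) n).E) :
    (subdivide G e0 n).s (subdivideEdge e0 n e) = (headAttach G (G.r e0) n).s e := by
  rcases e with g | i
  · by_cases hg : g = e0 <;> simp [subdivideEdge, subdivide, headAttach, hg]
  · simp [subdivideEdge, subdivide, headAttach]

theorem subdivide_r_natCast_zero :
    (subdivide G e0 n).r (Sum.inr ((0 : ℕ) : Fin (n + 1))) = Sum.inl (G.r e0) := by
  simp [subdivide]

theorem subdivide_r_natCast_succ {i : ℕ} (hi : i < n) :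
    (subdivide G e0 n).r (Sum.inr ((i + 1 : ℕ) : Fin (n + 1))) =
      (subdivide G e0 n).s (Sum.inr ((i : ℕ) : Fin (n + 1))) := by
  rw [Fin.natCast_eq_mk (show i + 1 < n + 1 by omega), Fin.natCast_eq_mk (show i < n + 1 by omega)]
  simp [subdivide, hi]

theorem subdivide_setOf_s_eq_s_natCast {i : ℕ} (hi : i < n) :
    {f | (subdivide G e0 n).s f = (subdivide G e0 n).s (Sum.inr ((i : ℕ) : Fin (n + 1)))} =
      {Sum.inr ((i : ℕ) : Fin (n + 1))} := by
  rw [Fin.natCast_eq_mk (show i < n + 1 by omega)]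
  ext f
  -- `simp` only sees the `Sum` structure once the types are stated as sums
  change (subdivide G e0 n).s f = (subdivide G e0 n).s (Sum.inr ⟨i, _⟩) ↔
    (f : {e : G.E // e ≠ e0} ⊕ Fin (n + 1)) = Sum.inr ⟨i, _⟩
  rcases f with ⟨g, hg⟩ | j
  · simp [subdivide, hi]
  · by_cases hj : (j : ℕ) < n
    · simp [subdivide, hi, hj]
      exact ⟨fun h => Fin.ext h, fun h => by rw [h]⟩
    · simp [subdivide, hi, hj]
      rintro rfl
      exact hj hi

end Subdivide

open Classical Fin.NatCast in
theorem subdivide_to_headAttach_family_general (G : DGraph) (e0 : G.E) (n : ℕ)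
    {A : Type*} [NonUnitalCStarAlgebra A]
    (P : (subdivide G e0 n).V → A) (S : (subdivide G e0 n).E → A)
    (hfam : IsCKFamily (subdivide G e0 n) P S) :
    IsCKFamily (headAttach G (G.r e0) n)
      (P : G.V ⊕ Fin n → A)
      (Sum.elim
        (fun g : G.E =>
          if h : g = e0 then
            descProd (fun j => S (Sum.inr ((j : Fin (n + 1))))) n
          else S (Sum.inl ⟨g, h⟩))
        (fun i : Fin n => S (Sum.inr ⟨(i : ℕ), Nat.lt_succ_of_lt i.2⟩))) := by
  set path : ℕ → (subdivide G e0 n).E := fun j => Sum.inr (j : Fin (n + 1))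
  have hpath : ∀ i < n, (subdivide G e0 n).r (path (i + 1)) = (subdivide G e0 n).s (path i) :=
    fun i hi => subdivide_r_natCast_succ hi
  have hproj : ∀ i < n, P ((subdivide G e0 n).s (path i)) = S (path i) * star (S (path i)) :=
    fun i hi => hfam.proj_eq_of_source_eq_singleton (subdivide_setOf_s_eq_s_natCast hi)
  refine hfam.of_edge_bijective (H := headAttach G (G.r e0) n) (σ := id) Function.injective_id
    subdivideEdge_bijective subdivide_s_subdivideEdge ?_ ?_
  · rintro (g | i)
    · by_cases hg : g = e0
      · subst hg
        simpa [subdivideEdge, path] using hfam.descProd_mul_star_descProd hpath hproj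
      · simp [subdivideEdge, hg]
    · rfl
  · rintro (g | i)
    · by_cases hg : g = e0
      · subst hg
        simp only [Sum.elim_inl, dif_pos]
        exact (hfam.star_descProd_mul_descProd hpath).trans (congrArg P subdivide_r_natCast_zero)
      · simp only [Sum.elim_inl, dif_neg hg]
        exact hfam.ck1 _
    · exact hfam.ck1 _

open Classical Fin.NatCast in
/-- Let `{P, S}` be a Cuntz–Krieger `E(e₀,n)`-family.  Keeping all projections, keeping
the partial isometries of the edges other than `e₀`, and replacing `s_{e₀}` by the
product `s_{e_{n+1}} s_{e_n} ⋯ s_{e_1}`, one obtains a Cuntz–Krieger `E(v₀,n)`-family,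
where `v₀ = r(e₀)`. -/
theorem subdivide_to_headAttach_family (G : DGraph) (e0 : G.E) (n : ℕ) (hn : 1 ≤ n)
    {A : Type*} [NonUnitalCStarAlgebra A]
    (P : (subdivide G e0 n).V → A) (S : (subdivide G e0 n).E → A)
    (hfam : IsCKFamily (subdivide G e0 n) P S) :
    IsCKFamily (headAttach G (G.r e0) n)
      (P : G.V ⊕ Fin n → A)
      (Sum.elim
        (fun g : G.E =>
          if h : g = e0 then
            descProd (fun j => S (Sum.inr ((j : Fin (n + 1))))) n
          else S (Sum.inl ⟨g, h⟩))
        (fun i : Fin n => S (Sum.inr ⟨(i : ℕ), Nat.lt_succ_of_lt i.2⟩))) :=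
  subdivide_to_headAttach_family_general G e0 n P S hfam
end
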